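/- arXiv:2409.05654 — 6 statements merged into one kernel-verified Lean document; each statement's English description precedes it below -/
import Mathlib

section
/- Let X be a nonnegative random variable, let U be uniformly distributed on [0, 1] and independent of X, and let α > 0. Then P(αX ≥ U) = E[min(αX, 1)] ≤ α·E[X] (Randomized Markov's inequality). -/
open MeasureTheory ProbabilityTheory

lemma volume_restrict_Icc_zero_one_Iic (t : ℝ) :
    (volume : Measure ℝ).restrict (Set.Icc 0 1) (Set.Iic t) = min (ENNReal.ofReal t) 1 := by
  have hinter : Set.Iic t ∩ Set.Icc 0 1 = Set.Icc 0 (min t 1) := by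
    ext u
    simp only [Set.mem_inter_iff, Set.mem_Iic, Set.mem_Icc, le_min_iff]
    tauto
  rw [Measure.restrict_apply measurableSet_Iic, hinter, Real.volume_Icc, sub_zero,
    ENNReal.ofReal_min, ENNReal.ofReal_one]

lemma ProbabilityTheory.IndepFun.measure_prodMk_mem_eq_lintegral
    {Ω β γ : Type*} [MeasurableSpace Ω] [MeasurableSpace β] [MeasurableSpace γ]
    {μ : Measure Ω} [IsFiniteMeasure μ] {X : Ω → β} {Y : Ω → γ} (hXY : IndepFun X Y μ)
    (hX : AEMeasurable X μ) (hY : AEMeasurable Y μ) {s : Set (β × γ)} (hs : MeasurableSet s) :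
    μ ((fun ω ↦ (X ω, Y ω)) ⁻¹' s) = ∫⁻ ω, μ.map Y (Prod.mk (X ω) ⁻¹' s) ∂μ := by
  rw [← Measure.map_apply_of_aemeasurable (hX.prodMk hY) hs,
    hXY.map_prod_eq_prod_map_map hX hY, Measure.prod_apply hs,
    lintegral_map' (measurable_measure_prodMk_left hs).aemeasurable hX]

lemma lintegral_min_ofReal_const_mul_one_le {Ω : Type*} [MeasurableSpace Ω] (μ : Measure Ω)
    (X : Ω → ℝ) {α : ℝ} (hα : 0 ≤ α) :
    ∫⁻ ω, min (ENNReal.ofReal (α * X ω)) 1 ∂μ ≤ ENNReal.ofReal α * ∫⁻ ω, ENNReal.ofReal (X ω) ∂μ :=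
  calc ∫⁻ ω, min (ENNReal.ofReal (α * X ω)) 1 ∂μ
      ≤ ∫⁻ ω, ENNReal.ofReal (α * X ω) ∂μ := lintegral_mono fun _ ↦ min_le_left _ _
    _ = ENNReal.ofReal α * ∫⁻ ω, ENNReal.ofReal (X ω) ∂μ := by
        simp_rw [ENNReal.ofReal_mul hα]
        exact lintegral_const_mul' _ _ ENNReal.ofReal_ne_top

theorem randomized_markov_inequality_general
    {Ω : Type*} [MeasurableSpace Ω] (P : Measure Ω) [IsProbabilityMeasure P]
    (X U : Ω → ℝ) (hX : Measurable X) (hU : Measurable U)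
    (hUnif : Measure.map U P = (volume : Measure ℝ).restrict (Set.Icc 0 1))
    (hindep : IndepFun X U P) (α : ℝ) (hα : 0 < α) :
    P {ω | U ω ≤ α * X ω} = ∫⁻ ω, min (ENNReal.ofReal (α * X ω)) 1 ∂P ∧
      ∫⁻ ω, min (ENNReal.ofReal (α * X ω)) 1 ∂P
        ≤ ENNReal.ofReal α * ∫⁻ ω, ENNReal.ofReal (X ω) ∂P := by
  have hs : MeasurableSet {p : ℝ × ℝ | p.2 ≤ α * p.1} :=
    measurableSet_le measurable_snd (measurable_const.mul measurable_fst)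
  refine ⟨?_, lintegral_min_ofReal_const_mul_one_le P X hα.le⟩
  calc P {ω | U ω ≤ α * X ω}
      = ∫⁻ ω, P.map U (Set.Iic (α * X ω)) ∂P :=
        hindep.measure_prodMk_mem_eq_lintegral hX.aemeasurable hU.aemeasurable hs
    _ = ∫⁻ ω, min (ENNReal.ofReal (α * X ω)) 1 ∂P := by
        simp_rw [hUnif, volume_restrict_Icc_zero_one_Iic]

/-- Randomized Markov's inequality: if `X ≥ 0`, `U` is uniform on `[0,1]` and
independent of `X`, and `α > 0`, then `P(αX ≥ U) = E[min(αX, 1)] ≤ α·E[X]`. -/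
theorem randomized_markov_inequality
    {Ω : Type*} [MeasurableSpace Ω] (P : Measure Ω) [IsProbabilityMeasure P]
    (X U : Ω → ℝ) (hX : Measurable X) (hU : Measurable U)
    (hXnn : ∀ ω, 0 ≤ X ω)
    (hUnif : Measure.map U P = (volume : Measure ℝ).restrict (Set.Icc 0 1))
    (hindep : IndepFun X U P) (α : ℝ) (hα : 0 < α) :
    P {ω | U ω ≤ α * X ω} = ∫⁻ ω, min (ENNReal.ofReal (α * X ω)) 1 ∂P ∧
      ∫⁻ ω, min (ENNReal.ofReal (α * X ω)) 1 ∂P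
        ≤ ENNReal.ofReal α * ∫⁻ ω, ENNReal.ofReal (X ω) ∂P :=
  randomized_markov_inequality_general P X U hX hU hUnif hindep α hα
end

section
/- Let P be a probability measure on Ω and let ε¹, ε² be nonnegative random variables such that E_P[ε² | ε¹] ≤ 1 P-almost surely and E_P[ε¹] ≤ 1. Then E_P[ε¹·ε²] ≤ 1. In particular, if this holds for every P in a hypothesis H, and ε¹ is a valid level-α₁ continuous test and ε² a valid level-α₂ continuous test for H, then the product ε¹·ε² is a valid level-α₁α₂ continuous test for H. -/
open MeasureTheory ENNReal

/-! Conditioning on `σ(ε₁)` pulls the `σ(ε₁)`-measurable factor `ε₁` out of `E[ε₁ ε₂ | ε₁]`, so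
`E[ε₁ ε₂] = E[ε₁ E[ε₂ | ε₁]] ≤ E[ε₁] ≤ 1`, using `ε₁ ≥ 0` and `E[ε₂ | ε₁] ≤ 1`. -/

theorem Set.mul_mem_Icc_zero {a b c d : ℝ} (hab : a ∈ Set.Icc 0 b) (hcd : c ∈ Set.Icc 0 d) :
    a * c ∈ Set.Icc 0 (b * d) :=
  ⟨mul_nonneg hab.1 hcd.1, mul_le_mul hab.2 hcd.2 hcd.1 (hab.1.trans hab.2)⟩

theorem MeasureTheory.Integrable.of_forall_mem_Icc_zero {Ω : Type*} [MeasurableSpace Ω]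
    {μ : Measure Ω} [IsFiniteMeasure μ] {f : Ω → ℝ} (hf : AEStronglyMeasurable f μ) {c : ℝ}
    (hfc : ∀ ω, f ω ∈ Set.Icc 0 c) : Integrable f μ :=
  Integrable.of_bound hf c <| ae_of_all _ fun ω => by
    rw [Real.norm_of_nonneg (hfc ω).1]
    exact (hfc ω).2

theorem MeasureTheory.integral_mul_le_integral_of_condExp_le_one {Ω : Type*}
    {m mΩ : MeasurableSpace Ω} {μ : Measure Ω} (hm : m ≤ mΩ) [SigmaFinite (μ.trim hm)]
    {f g : Ω → ℝ} (hf_nonneg : 0 ≤ f) (hf_meas : StronglyMeasurable[m] f) (hf : Integrable f μ)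
    (hg : Integrable g μ) (hfg : Integrable (f * g) μ) (hcond : μ[g|m] ≤ᵐ[μ] 1) :
    ∫ ω, f ω * g ω ∂μ ≤ ∫ ω, f ω ∂μ := by
  have hpull : μ[f * g|m] =ᵐ[μ] f * μ[g|m] :=
    condExp_mul_of_stronglyMeasurable_left hf_meas hfg hg
  calc ∫ ω, f ω * g ω ∂μ = ∫ ω, μ[f * g|m] ω ∂μ := (integral_condExp hm).symm
    _ = ∫ ω, (f * μ[g|m]) ω ∂μ := integral_congr_ae hpull
    _ ≤ ∫ ω, f ω ∂μ := by
      refine integral_mono_ae (integrable_condExp.congr hpull) hf ?_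
      filter_upwards [hcond] with ω hω
      exact mul_le_of_le_one_right (hf_nonneg ω) hω

theorem product_of_mean_independent_tests_is_valid_general
    {Ω : Type*} [MeasurableSpace Ω] (H : Set (Measure Ω))
    (hH : ∀ P ∈ H, IsProbabilityMeasure P)
    (α₁ α₂ : ℝ)
    (ε₁ ε₂ : Ω → ℝ) (h1m : Measurable ε₁) (h2m : Measurable ε₂)
    (h1b : ∀ ω, ε₁ ω ∈ Set.Icc 0 (1 / α₁)) (h2b : ∀ ω, ε₂ ω ∈ Set.Icc 0 (1 / α₂))
    (hcond : ∀ P ∈ H,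
      P[ε₂|MeasurableSpace.comap ε₁ (inferInstance : MeasurableSpace ℝ)]
        ≤ᵐ[P] fun _ => (1 : ℝ))
    (h1val : ∀ P ∈ H, ∫ ω, ε₁ ω ∂P ≤ 1) :
    (∀ ω, ε₁ ω * ε₂ ω ∈ Set.Icc 0 (1 / (α₁ * α₂))) ∧
      ∀ P ∈ H, ∫ ω, ε₁ ω * ε₂ ω ∂P ≤ 1 := by
  have hprod (ω : Ω) : ε₁ ω * ε₂ ω ∈ Set.Icc 0 (1 / (α₁ * α₂)) :=
    one_div_mul_one_div α₁ α₂ ▸ Set.mul_mem_Icc_zero (h1b ω) (h2b ω)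
  refine ⟨hprod, fun P hP => ?_⟩
  have := hH P hP
  calc ∫ ω, ε₁ ω * ε₂ ω ∂P ≤ ∫ ω, ε₁ ω ∂P :=
        integral_mul_le_integral_of_condExp_le_one h1m.comap_le (fun ω => (h1b ω).1)
          (Measurable.of_comap_le le_rfl).stronglyMeasurable
          (.of_forall_mem_Icc_zero h1m.aestronglyMeasurable h1b)
          (.of_forall_mem_Icc_zero h2m.aestronglyMeasurable h2b)
          (.of_forall_mem_Icc_zero (h1m.mul h2m).aestronglyMeasurable hprod) (hcond P hP)
    _ ≤ 1 := h1val P hP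

/-- Product of mean-independent valid continuous tests: if for every `P ∈ H` the
conditional expectation of `ε₂` given `ε₁` is at most `1` and `E_P[ε₁] ≤ 1`, then
`E_P[ε₁·ε₂] ≤ 1` for every `P ∈ H`; in particular, if `ε₁` is a valid level-`α₁`
continuous test and `ε₂` a valid level-`α₂` continuous test for `H`, the product
`ε₁·ε₂` is a valid level-`α₁α₂` continuous test for `H`. -/
theorem product_of_mean_independent_tests_is_valid
    {Ω : Type*} [MeasurableSpace Ω] (H : Set (Measure Ω))
    (hH : ∀ P ∈ H, IsProbabilityMeasure P)
    (α₁ α₂ : ℝ) (hα₁ : 0 < α₁) (hα₂ : 0 < α₂)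
    (ε₁ ε₂ : Ω → ℝ) (h1m : Measurable ε₁) (h2m : Measurable ε₂)
    (h1b : ∀ ω, ε₁ ω ∈ Set.Icc 0 (1 / α₁)) (h2b : ∀ ω, ε₂ ω ∈ Set.Icc 0 (1 / α₂))
    (hcond : ∀ P ∈ H,
      P[ε₂|MeasurableSpace.comap ε₁ (inferInstance : MeasurableSpace ℝ)]
        ≤ᵐ[P] fun _ => (1 : ℝ))
    (h1val : ∀ P ∈ H, ∫ ω, ε₁ ω ∂P ≤ 1) :
    (∀ ω, ε₁ ω * ε₂ ω ∈ Set.Icc 0 (1 / (α₁ * α₂))) ∧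
      ∀ P ∈ H, ∫ ω, ε₁ ω * ε₂ ω ∂P ≤ 1 :=
  product_of_mean_independent_tests_is_valid_general H hH α₁ α₂ ε₁ ε₂ h1m h2m h1b h2b hcond h1val
end

section
/- Let P, Q be probability measures on Ω with densities p, q with respect to H̄ = (P + Q)/2, let α ≥ 0, let U be a utility function, and for λ ≥ 0 set ε^λ(ω) = min((U')⁻¹(λ·p(ω)/q(ω)), 1/α), with conventions x/0 = ∞ for x > 0 and 0/0 = 0. If L := sup_{x > 0} x·U'(x) < ∞, then for every λ ≥ L one has E_P[ε^λ] ≤ L/λ ≤ 1; in particular there exists a finite λ ≥ 0 for which ε^λ satisfies the validity condition E_P[ε^λ] ≤ 1. -/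
open MeasureTheory ENNReal NNReal Set

/-- A utility function `U : [0, 1/α] → [0, ∞]` with derivative `U' = D`:
`U 0 = 0`, `U` is non-decreasing, concave and continuous on `[0, 1/α]`, finite
and differentiable (in real coordinates) on the interior, and its derivative `D`
is continuous, strictly decreasing, with `U'(0) = ∞` and `U'(∞) = 0`. -/
structure IsUtility (α : ℝ≥0∞) (U D : ℝ≥0∞ → ℝ≥0∞) : Prop where
  map_zero : U 0 = 0
  monotoneOn : MonotoneOn U (Icc 0 α⁻¹)
  concaveOn : ∀ x ∈ Icc (0 : ℝ≥0∞) α⁻¹, ∀ y ∈ Icc (0 : ℝ≥0∞) α⁻¹,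
    ∀ t : ℝ≥0∞, t ≤ 1 → t * U x + (1 - t) * U y ≤ U (t * x + (1 - t) * y)
  continuousOn : ContinuousOn U (Icc 0 α⁻¹)
  finite_of_lt : ∀ x : ℝ≥0∞, x < α⁻¹ → U x ≠ ∞
  deriv_finite : ∀ x : ℝ≥0∞, 0 < x → x < α⁻¹ → D x ≠ ∞
  hasDerivAt : ∀ x : ℝ, 0 < x → ENNReal.ofReal x < α⁻¹ →
    HasDerivAt (fun t : ℝ => (U (ENNReal.ofReal t)).toReal)
      ((D (ENNReal.ofReal x)).toReal) x
  deriv_continuousOn : ContinuousOn D (Icc 0 α⁻¹)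
  deriv_strictAntiOn : StrictAntiOn D (Icc 0 α⁻¹)
  deriv_zero : D 0 = ∞
  deriv_top : D ∞ = 0

/-!
For `λ > 0` write `r = λ p / q` and `m = min ((U')⁻¹ r) (1/α)`. Every `x < m` satisfies
`r ≤ U'(x)` (otherwise `(U')⁻¹ r ≤ x`), so `m r ≤ sup_x x U'(x) = L`; pointwise this reads
`p m ≤ (L/λ) q`. Integrating against `H̄` turns the left side into `E_P[m]` and the right side
into `(L/λ) Q(Ω) = L/λ`, which is at most `1` once `λ ≥ L`.
-/

section InverseDerivative

variable {a : ℝ≥0∞} {D Dinv : ℝ≥0∞ → ℝ≥0∞}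

lemma biSup_Ioc_mul_pos (ha : 0 < a) (hD : StrictAntiOn D (Icc 0 a)) :
    0 < ⨆ x ∈ Ioc 0 a, x * D x := by
  obtain ⟨x, hx0, hxa⟩ := exists_between ha
  have hDx : 0 < D x := zero_le.trans_lt <|
    hD ⟨zero_le, hxa.le⟩ ⟨zero_le, le_rfl⟩ hxa
  exact (ENNReal.mul_pos hx0.ne' hDx.ne').trans_le <|
    le_biSup (fun y => y * D y) (⟨hx0, hxa.le⟩ : x ∈ Ioc 0 a)

lemma min_inv_mul_le_biSup_mul (hD : StrictAntiOn D (Icc 0 a)) (hDinv : Antitone Dinv)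
    (hDinv_D : ∀ x ∈ Icc 0 a, 0 < D x → D x ≠ ∞ → Dinv (D x) = x) (r : ℝ≥0∞) :
    min (Dinv r) a * r ≤ ⨆ x ∈ Ioc 0 a, x * D x := by
  set m := min (Dinv r) a
  have hm : m ∈ Icc 0 a := ⟨zero_le, min_le_right _ _⟩
  refine ENNReal.mul_le_of_forall_lt fun x hxm s hsr => ?_
  rcases eq_or_ne x 0 with rfl | hx0
  · simp
  have hx : x ∈ Icc 0 a := ⟨zero_le, hxm.le.trans hm.2⟩
  have hs_le : s ≤ D x := by
    by_contra! hDs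
    have hDx_pos : 0 < D x := zero_le.trans_lt (hD hx hm hxm)
    have : Dinv r ≤ x :=
      hDinv_D x hx hDx_pos (hDs.trans hsr).ne_top ▸ hDinv (hDs.trans hsr).le
    exact (min_le_left _ _).trans this |>.not_gt hxm
  calc x * s ≤ x * D x := mul_le_mul_right hs_le x
    _ ≤ ⨆ x ∈ Ioc 0 a, x * D x :=
      le_biSup (fun y => y * D y) (⟨pos_iff_ne_zero.2 hx0, hx.2⟩ : x ∈ Ioc 0 a)

end InverseDerivative

lemma mul_apply_mul_div_le_div_mul {f : ℝ≥0∞ → ℝ≥0∞} {L c : ℝ≥0∞}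
    (hf : ∀ r, f r * r ≤ L) (hf_top : f ∞ = 0) (hL : L ≠ 0) (hc0 : c ≠ 0) (hc : c ≠ ∞)
    (p q : ℝ≥0∞) : p * f (c * (p / q)) ≤ L / c * q := by
  rcases eq_or_ne q 0 with rfl | hq0
  · rcases eq_or_ne p 0 with rfl | hp0
    · simp
    simp [ENNReal.div_zero hp0, ENNReal.mul_top hc0, hf_top]
  rcases eq_or_ne q ∞ with rfl | hq
  · rw [ENNReal.mul_top (ENNReal.div_pos hL hc).ne']
    exact le_top
  rw [← ENNReal.mul_div_right_comm, ENNReal.le_div_iff_mul_le (Or.inl hc0) (Or.inl hc)]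
  calc p * f (c * (p / q)) * c = f (c * (p / q)) * (c * (p / q)) * q := by
        rw [mul_assoc _ _ q, mul_assoc c, ENNReal.div_mul_cancel hq0 hq]; ring
    _ ≤ L * q := mul_le_mul_left (hf _) q

lemma lintegral_le_of_mul_le_density {Ω : Type*} [MeasurableSpace Ω] {ν P Q : Measure Ω}
    [IsProbabilityMeasure Q] {p q g : Ω → ℝ≥0∞} (hp : Measurable p)
    (hPd : P = ν.withDensity p) (hQd : Q = ν.withDensity q) {c : ℝ≥0∞} (hc : c ≠ ∞)
    (h : ∀ ω, p ω * g ω ≤ c * q ω) : ∫⁻ ω, g ω ∂P ≤ c := by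
  subst hPd
  have hq : ∫⁻ ω, q ω ∂ν = 1 := by
    rw [← setLIntegral_univ, ← withDensity_apply _ MeasurableSet.univ, ← hQd, measure_univ]
  calc ∫⁻ ω, g ω ∂ν.withDensity p ≤ ∫⁻ ω, p ω * g ω ∂ν :=
        lintegral_withDensity_le_lintegral_mul ν hp g
    _ ≤ ∫⁻ ω, c * q ω ∂ν := lintegral_mono h
    _ = c := by rw [lintegral_const_mul' c q hc, hq, mul_one]

theorem exists_valid_lambda_of_bounded_xUx_general
    {Ω : Type*} [MeasurableSpace Ω]
    (P Q : Measure Ω) [IsProbabilityMeasure Q]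
    (p q : Ω → ℝ≥0∞) (hp : Measurable p)
    (hPd : P = ((2 : ℝ≥0∞)⁻¹ • (P + Q)).withDensity p)
    (hQd : Q = ((2 : ℝ≥0∞)⁻¹ • (P + Q)).withDensity q)
    (α : ℝ≥0∞) (U D Dinv : ℝ≥0∞ → ℝ≥0∞) (hU : IsUtility α U D)
    (hDinv_anti : Antitone Dinv) (hDinv_top : Dinv ∞ = 0)
    (hDinv_inv : ∀ x ∈ Icc (0 : ℝ≥0∞) α⁻¹, 0 < D x → D x ≠ ∞ → Dinv (D x) = x)
    (L : ℝ≥0∞) (hL : L = ⨆ x ∈ Ioc (0 : ℝ≥0∞) α⁻¹, x * D x) (hLfin : L ≠ ∞) :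
    (∀ lam : ℝ≥0, L ≤ (lam : ℝ≥0∞) →
      ∫⁻ ω, min (Dinv ((lam : ℝ≥0∞) * (p ω / q ω))) α⁻¹ ∂P ≤ L / lam ∧
        L / (lam : ℝ≥0∞) ≤ 1) ∧
    ∃ lam : ℝ≥0, ∫⁻ ω, min (Dinv ((lam : ℝ≥0∞) * (p ω / q ω))) α⁻¹ ∂P ≤ 1 := by
  have bound : ∀ lam : ℝ≥0, L ≤ (lam : ℝ≥0∞) →
      ∫⁻ ω, min (Dinv ((lam : ℝ≥0∞) * (p ω / q ω))) α⁻¹ ∂P ≤ L / lam := by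
    intro lam hlam
    rcases eq_or_ne α⁻¹ 0 with hα | hα
    · simp [hα]
    have hLpos : 0 < L := hL ▸ biSup_Ioc_mul_pos (pos_iff_ne_zero.2 hα) hU.deriv_strictAntiOn
    have hlam0 : (lam : ℝ≥0∞) ≠ 0 := (hLpos.trans_le hlam).ne'
    refine lintegral_le_of_mul_le_density hp hPd hQd (ENNReal.div_ne_top hLfin hlam0) fun ω =>
      mul_apply_mul_div_le_div_mul (f := fun r => min (Dinv r) α⁻¹) (fun r => ?_)
        (by simp [hDinv_top]) hLpos.ne' hlam0 coe_ne_top (p ω) (q ω)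
    exact hL ▸ min_inv_mul_le_biSup_mul hU.deriv_strictAntiOn hDinv_anti hDinv_inv r
  have div_le_one : ∀ lam : ℝ≥0, L ≤ (lam : ℝ≥0∞) → L / lam ≤ 1 :=
    fun lam hlam => ENNReal.div_le_of_le_mul (by rwa [one_mul])
  have hL_le : L ≤ (L.toNNReal : ℝ≥0∞) := (coe_toNNReal hLfin).ge
  exact ⟨fun lam hlam => ⟨bound lam hlam, div_le_one lam hlam⟩,
    L.toNNReal, (bound _ hL_le).trans (div_le_one _ hL_le)⟩

/-- If `L := sup_{x > 0} x·U'(x) < ∞`, then for every `λ ≥ L` the test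
`ε^λ = min((U')⁻¹(λ·p/q), 1/α)` satisfies `E_P[ε^λ] ≤ L/λ ≤ 1`; in particular
there exists a finite `λ ≥ 0` for which `ε^λ` is valid, i.e. `E_P[ε^λ] ≤ 1`. -/
theorem exists_valid_lambda_of_bounded_xUx
    {Ω : Type*} [MeasurableSpace Ω]
    (P Q : Measure Ω) [IsProbabilityMeasure P] [IsProbabilityMeasure Q]
    (p q : Ω → ℝ≥0∞) (hp : Measurable p) (hq : Measurable q)
    (hPd : P = ((2 : ℝ≥0∞)⁻¹ • (P + Q)).withDensity p)
    (hQd : Q = ((2 : ℝ≥0∞)⁻¹ • (P + Q)).withDensity q)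
    (α : ℝ≥0∞) (U D Dinv : ℝ≥0∞ → ℝ≥0∞) (hU : IsUtility α U D)
    (hDinv_anti : Antitone Dinv) (hDinv_zero : Dinv 0 = ∞) (hDinv_top : Dinv ∞ = 0)
    (hDinv_inv : ∀ x ∈ Icc (0 : ℝ≥0∞) α⁻¹, 0 < D x → D x ≠ ∞ → Dinv (D x) = x)
    (L : ℝ≥0∞) (hL : L = ⨆ x ∈ Ioc (0 : ℝ≥0∞) α⁻¹, x * D x) (hLfin : L ≠ ∞) :
    (∀ lam : ℝ≥0, L ≤ (lam : ℝ≥0∞) →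
      ∫⁻ ω, min (Dinv ((lam : ℝ≥0∞) * (p ω / q ω))) α⁻¹ ∂P ≤ L / lam ∧
        L / (lam : ℝ≥0∞) ≤ 1) ∧
    ∃ lam : ℝ≥0, ∫⁻ ω, min (Dinv ((lam : ℝ≥0∞) * (p ω / q ω))) α⁻¹ ∂P ≤ 1 :=
  exists_valid_lambda_of_bounded_xUx_general P Q p q hp hPd hQd α U D Dinv hU hDinv_anti hDinv_top
    hDinv_inv L hL hLfin
end

section
/- Let Ω be a measurable space, H an arbitrary (possibly composite) set of probability measures on Ω, Q a probability measure on Ω, and 0 < α ≤ 1. Let E_α denote the set of measurable ε : Ω → [0, 1/α] with E_P[ε] ≤ 1 for every P ∈ H. Then there exists ε* ∈ E_α such that E_Q[ε*] ≥ E_Q[ε] for every ε ∈ E_α; that is, a level-α valid Neyman–Pearson-optimal (randomized) test of H against the simple alternative Q exists. -/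
/-!
Regard valid tests as elements of `L²(Q)`. The valid tests whose power is within `1/n` of the
supremum form a decreasing sequence of bounded convex sets; picking in each one an element of
almost minimal norm gives a Cauchy sequence, by the parallelogram law. A subsequence converges
`Q`-almost everywhere. Its pointwise `liminf` is a valid test by Fatou's lemma, which is needed
since the measures in `H` need not be absolutely continuous with respect to `Q`, and by dominated
convergence its power is the supremum.
-/

open MeasureTheory ENNReal NNReal Set Filter Topology

section Hilbert

variable {E : Type*} [SeminormedAddCommGroup E] [InnerProductSpace ℝ E]

theorem norm_sub_sq_le_of_convex {K : Set E} (hK : Convex ℝ K) {d : ℝ}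
    (hd : ∀ z ∈ K, d ≤ ‖z‖ ^ 2) {x y : E} (hx : x ∈ K) (hy : y ∈ K) :
    ‖x - y‖ ^ 2 ≤ 2 * ‖x‖ ^ 2 + 2 * ‖y‖ ^ 2 - 4 * d := by
  have hmid : d ≤ ‖(2⁻¹ : ℝ) • (x + y)‖ ^ 2 :=
    hd _ (by simpa only [smul_add] using hK hx hy (by norm_num) (by norm_num) (by norm_num))
  rw [norm_smul, mul_pow] at hmid
  norm_num at hmid
  linarith [parallelogram_law_with_norm ℝ x y]

theorem exists_cauchySeq_mem_of_antitone_convex {C : ℕ → Set E} (hanti : Antitone C)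
    (hconv : ∀ n, Convex ℝ (C n)) (hne : ∀ n, (C n).Nonempty)
    (hbdd : Bornology.IsBounded (C 0)) :
    ∃ x : ℕ → E, (∀ n, x n ∈ C n) ∧ CauchySeq x := by
  obtain ⟨R, hR⟩ := isBounded_iff_forall_norm_le.1 hbdd
  set d : ℕ → ℝ := fun n => sInf ((‖·‖ ^ 2) '' C n)
  have hbddBelow : ∀ n, BddBelow ((‖·‖ ^ 2) '' C n) :=
    fun n => ⟨0, by rintro _ ⟨y, -, rfl⟩; positivity⟩
  have hd_le : ∀ n, ∀ y ∈ C n, d n ≤ ‖y‖ ^ 2 :=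
    fun n y hy => csInf_le (hbddBelow n) (mem_image_of_mem _ hy)
  have hd_mono : Monotone d := fun m n hmn =>
    csInf_le_csInf (hbddBelow m) ((hne n).image _) (image_mono (hanti hmn))
  have hd_bdd : BddAbove (range d) := by
    refine ⟨R ^ 2, ?_⟩
    rintro _ ⟨n, rfl⟩
    obtain ⟨y, hy⟩ := hne n
    have hyR := hR y (hanti (Nat.zero_le n) hy)
    exact (hd_le n y hy).trans (pow_le_pow_left₀ (norm_nonneg y) hyR 2)
  have hd_lim : Tendsto d atTop (𝓝 (⨆ k, d k)) := tendsto_atTop_ciSup hd_mono hd_bdd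
  have hx : ∀ n, ∃ x ∈ C n, ‖x‖ ^ 2 < d n + 1 / (n + 1) := fun n => by
    obtain ⟨_, ⟨x, hx, rfl⟩, hlt⟩ := exists_lt_of_csInf_lt ((hne n).image _)
      (lt_add_of_pos_right (d n) (Nat.one_div_pos_of_nat (n := n)))
    exact ⟨x, hx, hlt⟩
  choose x hxC hxd using hx
  refine ⟨x, hxC, cauchySeq_of_le_tendsto_0'
    (fun n => √(4 * (1 / (n + 1)) + 2 * ((⨆ k, d k) - d n))) (fun m n hmn => ?_) ?_⟩
  · -- `x m` and `x n` both lie in `C m`, where `‖·‖²` is at least `d m`.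
    have hparallelogram := norm_sub_sq_le_of_convex (hconv m) (hd_le m) (hxC m) (hanti hmn (hxC n))
    have hmn' : 1 / ((n : ℝ) + 1) ≤ 1 / (m + 1) := by gcongr
    rw [dist_eq_norm]
    refine Real.le_sqrt_of_sq_le ?_
    linarith [hxd m, hxd n, le_ciSup hd_bdd n]
  · have h := ((tendsto_one_div_add_atTop_nhds_zero_nat (𝕜 := ℝ)).const_mul 4).add
      (((tendsto_const_nhds (x := ⨆ k, d k)).sub hd_lim).const_mul 2)
    simpa using h.sqrt

end Hilbert

section Tests

variable {Ω : Type*} [MeasurableSpace Ω]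

def validTests (H : Set (Measure Ω)) (α : ℝ≥0∞) : Set (Ω → ℝ≥0∞) :=
  {ε | Measurable ε ∧ (∀ ω, ε ω ≤ α⁻¹) ∧ ∀ P ∈ H, ∫⁻ ω, ε ω ∂P ≤ 1}

noncomputable def optimalPower (H : Set (Measure Ω)) (α : ℝ≥0∞) (Q : Measure Ω) : ℝ≥0∞ :=
  ⨆ ε ∈ validTests H α, ∫⁻ ω, ε ω ∂Q

variable {H : Set (Measure Ω)} {α : ℝ≥0∞}

theorem zero_mem_validTests : 0 ∈ validTests H α :=
  ⟨measurable_const, fun _ => zero_le, fun _ _ => by simp⟩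

theorem convex_validTests : Convex ℝ≥0∞ (validTests H α) := by
  rintro ε ⟨hεm, hεb, hεP⟩ δ ⟨hδm, hδb, hδP⟩ a b - - hab
  refine ⟨(hεm.const_smul a).add (hδm.const_smul b), fun ω => ?_, fun P hP => ?_⟩
  · calc a * ε ω + b * δ ω ≤ a * α⁻¹ + b * α⁻¹ := by gcongr <;> simp only [*]
      _ = α⁻¹ := by rw [← add_mul, hab, one_mul]
  · calc ∫⁻ ω, a * ε ω + b * δ ω ∂P = a * ∫⁻ ω, ε ω ∂P + b * ∫⁻ ω, δ ω ∂P := by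
          rw [lintegral_add_left (hεm.const_mul a), lintegral_const_mul _ hεm,
            lintegral_const_mul _ hδm]
      _ ≤ a * 1 + b * 1 := by gcongr <;> simp only [*]
      _ = 1 := by rw [mul_one, mul_one, hab]

theorem convex_setOf_le_lintegral (μ : Measure Ω) (c : ℝ≥0∞) :
    Convex ℝ≥0∞ {f : Ω → ℝ≥0∞ | c ≤ ∫⁻ ω, f ω ∂μ} := by
  intro f hf g hg a b _ _ hab
  calc c = a * c + b * c := by rw [← add_mul, hab, one_mul]
    _ ≤ a * ∫⁻ ω, f ω ∂μ + b * ∫⁻ ω, g ω ∂μ := by gcongr <;> assumption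
    _ ≤ ∫⁻ ω, a * f ω ∂μ + ∫⁻ ω, b * g ω ∂μ :=
        add_le_add (lintegral_const_mul_le _ _) (lintegral_const_mul_le _ _)
    _ ≤ ∫⁻ ω, (a • f + b • g) ω ∂μ := le_lintegral_add _ _

theorem liminf_mem_validTests {g : ℕ → Ω → ℝ≥0∞} (hg : ∀ n, g n ∈ validTests H α) :
    (fun ω => liminf (fun n => g n ω) atTop) ∈ validTests H α := by
  refine ⟨.liminf fun n => (hg n).1, fun ω => ?_, fun P hP => ?_⟩
  · exact liminf_le_of_frequently_le' (.of_forall fun n => (hg n).2.1 ω)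
  · calc ∫⁻ ω, liminf (fun n => g n ω) atTop ∂P ≤ liminf (fun n => ∫⁻ ω, g n ω ∂P) atTop :=
          lintegral_liminf_le fun n => (hg n).1
      _ ≤ 1 := liminf_le_of_frequently_le' (.of_forall fun n => (hg n).2.2 P hP)

theorem ne_top_of_mem_validTests (hα : α ≠ 0) {ε : Ω → ℝ≥0∞} (hε : ε ∈ validTests H α) (ω : Ω) :
    ε ω ≠ ∞ :=
  ne_top_of_le_ne_top (inv_ne_top.2 hα) (hε.2.1 ω)

theorem norm_toReal_le_of_mem_validTests (hα : α ≠ 0) {ε : Ω → ℝ≥0∞}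
    (hε : ε ∈ validTests H α) (ω : Ω) : ‖(ε ω).toReal‖ ≤ α⁻¹.toReal := by
  rw [Real.norm_of_nonneg toReal_nonneg]
  exact toReal_mono (inv_ne_top.2 hα) (hε.2.1 ω)

theorem lintegral_le_of_mem_validTests {μ : Measure Ω} {ε : Ω → ℝ≥0∞}
    (hε : ε ∈ validTests H α) : ∫⁻ ω, ε ω ∂μ ≤ α⁻¹ * μ univ :=
  (lintegral_mono hε.2.1).trans_eq (lintegral_const _)

theorem lintegral_le_optimalPower {Q : Measure Ω} {ε : Ω → ℝ≥0∞} (hε : ε ∈ validTests H α) :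
    ∫⁻ ω, ε ω ∂Q ≤ optimalPower H α Q :=
  le_biSup (fun ε => ∫⁻ ω, ε ω ∂Q) hε

theorem optimalPower_ne_top (Q : Measure Ω) [IsFiniteMeasure Q] (hα : α ≠ 0) :
    optimalPower H α Q ≠ ∞ :=
  ne_top_of_le_ne_top (mul_ne_top (inv_ne_top.2 hα) (measure_ne_top Q univ))
    (iSup₂_le fun _ => lintegral_le_of_mem_validTests)

theorem exists_mem_validTests_sub_le (Q : Measure Ω) [IsFiniteMeasure Q] (hα : α ≠ 0)
    {c : ℝ≥0∞} (hc : c ≠ 0) :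
    ∃ ε ∈ validTests H α, optimalPower H α Q - c ≤ ∫⁻ ω, ε ω ∂Q := by
  rcases eq_or_ne (optimalPower H α Q) 0 with hD | hD
  · exact ⟨0, zero_mem_validTests, by simp [hD]⟩
  obtain ⟨ε, hε, hlt⟩ := lt_biSup_iff.1 (ENNReal.sub_lt_self (optimalPower_ne_top Q hα) hD hc)
  exact ⟨ε, hε, hlt.le⟩

theorem convex_setOf_ae_eq_toReal {p : ℝ≥0∞} {μ : Measure Ω} {S : Set (Ω → ℝ≥0∞)}
    (hS : Convex ℝ≥0∞ S) (hfin : ∀ f ∈ S, ∀ ω, f ω ≠ ∞) :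
    Convex ℝ {u : Lp ℝ p μ | ∃ f ∈ S, u =ᵐ[μ] fun ω => (f ω).toReal} := by
  rintro u ⟨f, hf, hu⟩ v ⟨g, hg, hv⟩ a b ha hb hab
  refine ⟨ENNReal.ofReal a • f + ENNReal.ofReal b • g,
    hS hf hg zero_le zero_le (by rw [← ofReal_add ha hb, hab, ofReal_one]), ?_⟩
  filter_upwards [Lp.coeFn_add (a • u) (b • v), Lp.coeFn_smul a u, Lp.coeFn_smul b v, hu, hv]
    with ω hadd hsmul_u hsmul_v hfω hgω
  simp only [hadd, hsmul_u, hsmul_v, Pi.add_apply, Pi.smul_apply, smul_eq_mul, hfω, hgω]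
  rw [toReal_add (mul_ne_top ofReal_ne_top (hfin f hf ω)) (mul_ne_top ofReal_ne_top (hfin g hg ω)),
    toReal_mul, toReal_mul, toReal_ofReal ha, toReal_ofReal hb]

theorem exists_subseq_tendsto_ae_of_cauchySeq {p : ℝ≥0∞} [Fact (1 ≤ p)] {μ : Measure Ω}
    {u : ℕ → Lp ℝ p μ} {g : ℕ → Ω → ℝ≥0∞} (hu : CauchySeq u)
    (hug : ∀ n, u n =ᵐ[μ] fun ω => (g n ω).toReal) (hfin : ∀ n ω, g n ω ≠ ∞) :
    ∃ ns : ℕ → ℕ, StrictMono ns ∧ ∀ᵐ ω ∂μ, ∃ l, Tendsto (fun k => g (ns k) ω) atTop (𝓝 l) := by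
  obtain ⟨v, hv⟩ := cauchySeq_tendsto_of_complete hu
  obtain ⟨ns, hns, hae⟩ := (tendstoInMeasure_of_tendsto_Lp hv).exists_seq_tendsto_ae
  refine ⟨ns, hns, ?_⟩
  filter_upwards [hae, ae_all_iff.2 hug] with ω hω hgω
  refine ⟨ENNReal.ofReal (v ω), ((ENNReal.continuous_ofReal.tendsto _).comp hω).congr fun k => ?_⟩
  simp [hgω, ofReal_toReal (hfin (ns k) ω)]

theorem exists_maximizing_validTests_seq_tendsto_ae (H : Set (Measure Ω)) (Q : Measure Ω)
    [IsFiniteMeasure Q] (hα : α ≠ 0) :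
    ∃ g : ℕ → Ω → ℝ≥0∞, (∀ n, g n ∈ validTests H α) ∧
      Tendsto (fun n => ∫⁻ ω, g n ω ∂Q) atTop (𝓝 (optimalPower H α Q)) ∧
      ∀ᵐ ω ∂Q, ∃ l, Tendsto (fun n => g n ω) atTop (𝓝 l) := by
  set D := optimalPower H α Q
  set S : ℕ → Set (Ω → ℝ≥0∞) := fun n =>
    validTests H α ∩ {ε | D - (n : ℝ≥0∞)⁻¹ ≤ ∫⁻ ω, ε ω ∂Q}
  set C : ℕ → Set (Lp ℝ 2 Q) := fun n => {u | ∃ f ∈ S n, u =ᵐ[Q] fun ω => (f ω).toReal}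
  have hanti : Antitone C := by
    rintro m n hmn u ⟨f, ⟨hf, hfD⟩, hu⟩
    refine ⟨f, ⟨hf, le_trans (tsub_le_tsub_left ?_ D) hfD⟩, hu⟩
    exact ENNReal.inv_le_inv.2 (Nat.cast_le.2 hmn)
  have hne : ∀ n, (C n).Nonempty := fun n => by
    obtain ⟨ε, hε, hεD⟩ :=
      exists_mem_validTests_sub_le (H := H) Q hα (ENNReal.inv_ne_zero.2 (natCast_ne_top n))
    have hmem : MemLp (fun ω => (ε ω).toReal) 2 Q :=
      .of_bound hε.1.ennreal_toReal.aestronglyMeasurable _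
        (ae_of_all _ (norm_toReal_le_of_mem_validTests hα hε))
    exact ⟨hmem.toLp _, ε, ⟨hε, hεD⟩, hmem.coeFn_toLp⟩
  have hbdd : Bornology.IsBounded (C 0) := by
    refine isBounded_iff_forall_norm_le.2
      ⟨measureUnivNNReal Q ^ (2 : ℝ≥0∞).toReal⁻¹ * α⁻¹.toReal, fun u ⟨f, ⟨hf, _⟩, hu⟩ => ?_⟩
    exact Lp.norm_le_of_ae_bound toReal_nonneg
      (hu.mono fun ω hω => hω ▸ norm_toReal_le_of_mem_validTests hα hf ω)
  have hconv : ∀ n, Convex ℝ (C n) := fun n =>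
    convex_setOf_ae_eq_toReal (convex_validTests.inter (convex_setOf_le_lintegral Q _))
      fun _ hf => ne_top_of_mem_validTests hα hf.1
  obtain ⟨u, huC, hcauchy⟩ := exists_cauchySeq_mem_of_antitone_convex hanti hconv hne hbdd
  choose g hg hug using huC
  obtain ⟨ns, hns, hae⟩ :=
    exists_subseq_tendsto_ae_of_cauchySeq hcauchy hug fun n => ne_top_of_mem_validTests hα (hg n).1
  refine ⟨fun k => g (ns k), fun k => (hg (ns k)).1, ?_, hae⟩
  have hlower : Tendsto (fun k => D - ((ns k : ℕ) : ℝ≥0∞)⁻¹) atTop (𝓝 D) := by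
    simpa using ENNReal.Tendsto.sub tendsto_const_nhds
      (ENNReal.tendsto_inv_nat_nhds_zero.comp hns.tendsto_atTop) (.inl (optimalPower_ne_top Q hα))
  exact tendsto_of_tendsto_of_tendsto_of_le_of_le hlower tendsto_const_nhds
    (fun k => (hg (ns k)).2) (fun k => lintegral_le_optimalPower (hg (ns k)).1)

theorem tendsto_lintegral_liminf_of_validTests {μ : Measure Ω} [IsFiniteMeasure μ] (hα : α ≠ 0)
    {g : ℕ → Ω → ℝ≥0∞} (hg : ∀ n, g n ∈ validTests H α)
    (hconv : ∀ᵐ ω ∂μ, ∃ l, Tendsto (fun n => g n ω) atTop (𝓝 l)) :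
    Tendsto (fun n => ∫⁻ ω, g n ω ∂μ) atTop (𝓝 (∫⁻ ω, liminf (fun n => g n ω) atTop ∂μ)) :=
  tendsto_lintegral_of_dominated_convergence (fun _ => α⁻¹) (fun n => (hg n).1)
    (fun n => ae_of_all _ (hg n).2.1)
    (by simpa using mul_ne_top (inv_ne_top.2 hα) (measure_ne_top μ univ))
    (hconv.mono fun _ ⟨_, hl⟩ => hl.liminf_eq ▸ hl)

end Tests

theorem exists_neyman_pearson_optimal_test_general
    {Ω : Type*} [MeasurableSpace Ω]
    (H : Set (Measure Ω))
    (Q : Measure Ω) [IsProbabilityMeasure Q]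
    (α : ℝ≥0∞) (hα0 : 0 < α) :
    ∃ εs : Ω → ℝ≥0∞, Measurable εs ∧ (∀ ω, εs ω ≤ α⁻¹) ∧
      (∀ P ∈ H, ∫⁻ ω, εs ω ∂P ≤ 1) ∧
      ∀ ε : Ω → ℝ≥0∞, Measurable ε → (∀ ω, ε ω ≤ α⁻¹) →
        (∀ P ∈ H, ∫⁻ ω, ε ω ∂P ≤ 1) →
        ∫⁻ ω, ε ω ∂Q ≤ ∫⁻ ω, εs ω ∂Q := by
  obtain ⟨g, hg, hpower, hconv⟩ := exists_maximizing_validTests_seq_tendsto_ae H Q hα0.ne'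
  obtain ⟨hm, hb, hP⟩ := liminf_mem_validTests hg
  refine ⟨_, hm, hb, hP, fun ε hεm hεb hεP => ?_⟩
  calc ∫⁻ ω, ε ω ∂Q ≤ optimalPower H α Q := lintegral_le_optimalPower ⟨hεm, hεb, hεP⟩
    _ = _ := tendsto_nhds_unique hpower (tendsto_lintegral_liminf_of_validTests hα0.ne' hg hconv)

/-- A level-`α` valid Neyman–Pearson-optimal (randomized/continuous) test of an
arbitrary (possibly composite) hypothesis `H` against a simple alternative `Q`
exists: there is a measurable `ε* : Ω → [0, 1/α]` with `E_P[ε*] ≤ 1` for every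
`P ∈ H`, such that `E_Q[ε*] ≥ E_Q[ε]` for every such test `ε`. -/
theorem exists_neyman_pearson_optimal_test
    {Ω : Type*} [MeasurableSpace Ω]
    (H : Set (Measure Ω)) (hH : ∀ P ∈ H, IsProbabilityMeasure P)
    (Q : Measure Ω) [IsProbabilityMeasure Q]
    (α : ℝ≥0∞) (hα0 : 0 < α) (hα1 : α ≤ 1) :
    ∃ εs : Ω → ℝ≥0∞, Measurable εs ∧ (∀ ω, εs ω ≤ α⁻¹) ∧
      (∀ P ∈ H, ∫⁻ ω, εs ω ∂P ≤ 1) ∧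
      ∀ ε : Ω → ℝ≥0∞, Measurable ε → (∀ ω, ε ω ≤ α⁻¹) →
        (∀ P ∈ H, ∫⁻ ω, ε ω ∂P ≤ 1) →
        ∫⁻ ω, ε ω ∂Q ≤ ∫⁻ ω, εs ω ∂Q :=
  exists_neyman_pearson_optimal_test_general H Q α hα0
end

section
/- Let 0 < α ≤ 1, let H be a set of probability measures and Q a probability measure on Ω, and let E_α be the set of valid level-α continuous tests for H. For each h ∈ (0, 1), let ε_h ∈ E_α satisfy E_Q[(ε_h)^h] ≥ E_Q[ε^h] for every ε ∈ E_α (i.e., ε_h is h-generalized-mean optimal at level α). Suppose the pointwise limit L(ω) = lim_{h→1⁻} ε_h(ω) exists for every ω ∈ Ω. Then E_Q[L] ≥ E_Q[ε] for every ε ∈ E_α; that is, the limit is an optimizer of the traditional (h = 1) power target. -/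
open MeasureTheory ENNReal NNReal Set Filter Topology

/-!
For a test `ε'` bounded by `M = α⁻¹` and `h ∈ (0, 1)`, the interpolation `x ≤ M ^ (1 - h) * x ^ h`
on `[0, M]` and the weighted AM-GM bound `x ^ h ≤ x + (1 - h)` give
`E_Q[ε'] ≤ M ^ (1 - h) E_Q[ε' ^ h] ≤ M ^ (1 - h) E_Q[ε_h ^ h] ≤ M ^ (1 - h) (E_Q[ε_h] + (1 - h))`.
As `h → 1⁻`, the factor `M ^ (1 - h)` tends to `1` and, by bounded convergence, `E_Q[ε_h] → E_Q[L]`.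
-/

namespace ENNReal

theorem le_rpow_one_sub_mul_rpow {x M : ℝ≥0∞} (hxM : x ≤ M) (hM : M ≠ ∞) {h : ℝ} (h1 : h ≤ 1) :
    x ≤ M ^ (1 - h) * x ^ h := by
  rcases eq_or_ne x 0 with rfl | hx0
  · exact zero_le
  calc x = x ^ (1 - h) * x ^ h := by
        rw [← ENNReal.rpow_add _ _ hx0 (ne_top_of_le_ne_top hM hxM), sub_add_cancel,
          ENNReal.rpow_one]
    _ ≤ M ^ (1 - h) * x ^ h := by gcongr

theorem rpow_le_self_add_ofReal_one_sub (x : ℝ≥0∞) {h : ℝ} (h0 : 0 ≤ h) (h1 : h ≤ 1) :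
    x ^ h ≤ x + ENNReal.ofReal (1 - h) := by
  rcases eq_or_ne x ∞ with rfl | hx
  · simp
  lift x to ℝ≥0 using hx
  have hw : h.toNNReal + (1 - h).toNNReal = 1 := by
    rw [← Real.toNNReal_add h0 (by linarith)]; norm_num
  have amgm := NNReal.geom_mean_le_arith_mean2_weighted _ _ x 1 hw
  rw [NNReal.one_rpow, mul_one, mul_one, Real.coe_toNNReal h h0] at amgm
  have hhx : h.toNNReal * x ≤ x := mul_le_of_le_one_left' (Real.toNNReal_le_one.mpr h1)
  rw [← ENNReal.coe_rpow_of_nonneg _ h0, ENNReal.ofReal]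
  exact_mod_cast amgm.trans (add_le_add_left hhx _)

theorem continuous_const_rpow {M : ℝ≥0∞} (hM0 : M ≠ 0) (hM : M ≠ ∞) :
    Continuous fun y : ℝ => M ^ y := by
  have hpos : 0 < M.toReal := ENNReal.toReal_pos hM0 hM
  have hM_eq : ∀ y : ℝ, M ^ y = ENNReal.ofReal (M.toReal ^ y) := fun y => by
    rw [← ENNReal.ofReal_rpow_of_pos hpos, ENNReal.ofReal_toReal hM]
  simp only [hM_eq]
  exact ENNReal.continuous_ofReal.comp (Real.continuous_const_rpow hpos.ne')

theorem tendsto_rpow_one_sub_mul_add_ofReal_one_sub {M : ℝ≥0∞} (hM0 : M ≠ 0) (hM : M ≠ ∞)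
    {l : Filter ℝ} (hl : l ≤ 𝓝 1) {a : ℝ → ℝ≥0∞} {b : ℝ≥0∞} (ha : Tendsto a l (𝓝 b)) :
    Tendsto (fun h => M ^ (1 - h) * (a h + ENNReal.ofReal (1 - h))) l (𝓝 b) := by
  have hsub : Tendsto (fun h : ℝ => 1 - h) l (𝓝 0) := by
    simpa using (tendsto_id.mono_left hl).const_sub (1 : ℝ)
  have hpow : Tendsto (fun h : ℝ => M ^ (1 - h)) l (𝓝 1) :=
    ((continuous_const_rpow hM0 hM).tendsto' 0 1 (ENNReal.rpow_zero)).comp hsub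
  have hofReal : Tendsto (fun h : ℝ => ENNReal.ofReal (1 - h)) l (𝓝 0) :=
    (ENNReal.continuous_ofReal.tendsto' 0 0 ENNReal.ofReal_zero).comp hsub
  simpa using ENNReal.Tendsto.mul hpow (Or.inl one_ne_zero) (ha.add hofReal)
    (Or.inr one_ne_top)

end ENNReal

section

variable {Ω : Type*} [MeasurableSpace Ω]

theorem lintegral_le_rpow_one_sub_mul_lintegral_rpow (μ : Measure Ω) {f : Ω → ℝ≥0∞}
    {M : ℝ≥0∞} (hfM : ∀ ω, f ω ≤ M) (hM : M ≠ ∞) {h : ℝ} (h1 : h ≤ 1) :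
    ∫⁻ ω, f ω ∂μ ≤ M ^ (1 - h) * ∫⁻ ω, f ω ^ h ∂μ := by
  rw [← lintegral_const_mul' _ _ (ENNReal.rpow_ne_top_of_nonneg (by linarith) hM)]
  exact lintegral_mono fun ω => ENNReal.le_rpow_one_sub_mul_rpow (hfM ω) hM h1

theorem lintegral_rpow_le_lintegral_add_ofReal_one_sub (μ : Measure Ω) [IsProbabilityMeasure μ]
    (f : Ω → ℝ≥0∞) {h : ℝ} (h0 : 0 ≤ h) (h1 : h ≤ 1) :
    ∫⁻ ω, f ω ^ h ∂μ ≤ ∫⁻ ω, f ω ∂μ + ENNReal.ofReal (1 - h) := by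
  calc ∫⁻ ω, f ω ^ h ∂μ ≤ ∫⁻ ω, (f ω + ENNReal.ofReal (1 - h)) ∂μ :=
        lintegral_mono fun ω => ENNReal.rpow_le_self_add_ofReal_one_sub (f ω) h0 h1
    _ = ∫⁻ ω, f ω ∂μ + ENNReal.ofReal (1 - h) := by
        rw [lintegral_add_right _ measurable_const, lintegral_const, measure_univ, mul_one]

end

theorem limit_of_generalized_mean_optimal_is_NP_optimal_general
    {Ω : Type*} [MeasurableSpace Ω]
    (H : Set (Measure Ω))
    (Q : Measure Ω) [IsProbabilityMeasure Q]
    (α : ℝ≥0∞) (hα0 : 0 < α) (hα1 : α ≤ 1)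
    (ε : ℝ → Ω → ℝ≥0∞)
    (hmeas : ∀ h ∈ Ioo (0 : ℝ) 1, Measurable (ε h))
    (hbdd : ∀ h ∈ Ioo (0 : ℝ) 1, ∀ ω, ε h ω ≤ α⁻¹)
    (hopt : ∀ h ∈ Ioo (0 : ℝ) 1, ∀ ε' : Ω → ℝ≥0∞, Measurable ε' →
      (∀ ω, ε' ω ≤ α⁻¹) → (∀ P ∈ H, ∫⁻ ω, ε' ω ∂P ≤ 1) →
      ∫⁻ ω, ε' ω ^ h ∂Q ≤ ∫⁻ ω, ε h ω ^ h ∂Q)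
    (L : Ω → ℝ≥0∞)
    (hL : ∀ ω, Filter.Tendsto (fun h => ε h ω)
      (nhdsWithin 1 (Ioo (0 : ℝ) 1)) (nhds (L ω))) :
    ∀ ε' : Ω → ℝ≥0∞, Measurable ε' → (∀ ω, ε' ω ≤ α⁻¹) →
      (∀ P ∈ H, ∫⁻ ω, ε' ω ∂P ≤ 1) →
      ∫⁻ ω, ε' ω ∂Q ≤ ∫⁻ ω, L ω ∂Q := by
  intro ε' hε'meas hε'bdd hε'valid
  have hM : α⁻¹ ≠ ∞ := ENNReal.inv_ne_top.mpr hα0.ne'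
  have hM0 : α⁻¹ ≠ 0 := ENNReal.inv_ne_zero.mpr (ne_top_of_le_ne_top one_ne_top hα1)
  have hbound : ∀ h ∈ Ioo (0 : ℝ) 1,
      ∫⁻ ω, ε' ω ∂Q ≤ α⁻¹ ^ (1 - h) * (∫⁻ ω, ε h ω ∂Q + ENNReal.ofReal (1 - h)) :=
    fun h hh => (lintegral_le_rpow_one_sub_mul_lintegral_rpow Q hε'bdd hM hh.2.le).trans <|
      mul_le_mul_right ((hopt h hh ε' hε'meas hε'bdd hε'valid).trans
        (lintegral_rpow_le_lintegral_add_ofReal_one_sub Q (ε h) hh.1.le hh.2.le)) _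
  have hconv : Tendsto (fun h => ∫⁻ ω, ε h ω ∂Q) (𝓝[Ioo 0 1] 1) (𝓝 (∫⁻ ω, L ω ∂Q)) :=
    tendsto_lintegral_filter_of_dominated_convergence (fun _ => α⁻¹)
      (eventually_nhdsWithin_of_forall hmeas)
      (eventually_nhdsWithin_of_forall fun h hh => ae_of_all _ (hbdd h hh))
      (by simpa using hM) (ae_of_all _ hL)
  have := right_nhdsWithin_Ioo_neBot (zero_lt_one' ℝ)
  exact ge_of_tendsto (ENNReal.tendsto_rpow_one_sub_mul_add_ofReal_one_sub hM0 hM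
    nhdsWithin_le_nhds hconv) (eventually_nhdsWithin_of_forall hbound)

/-- The pointwise limit as `h → 1⁻` of `h`-generalized-mean optimal level-`α`
continuous tests is an optimizer of the traditional (`h = 1`) power target: if
for each `h ∈ (0,1)` the test `ε_h` is a valid level-`α` continuous test for `H`
maximizing `E_Q[ε^h]` over valid level-`α` continuous tests, and
`L(ω) = lim_{h→1⁻} ε_h(ω)` exists pointwise, then `E_Q[L] ≥ E_Q[ε]` for every
valid level-`α` continuous test `ε`. -/
theorem limit_of_generalized_mean_optimal_is_NP_optimal
    {Ω : Type*} [MeasurableSpace Ω]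
    (H : Set (Measure Ω)) (hH : ∀ P ∈ H, IsProbabilityMeasure P)
    (Q : Measure Ω) [IsProbabilityMeasure Q]
    (α : ℝ≥0∞) (hα0 : 0 < α) (hα1 : α ≤ 1)
    (ε : ℝ → Ω → ℝ≥0∞)
    (hmeas : ∀ h ∈ Ioo (0 : ℝ) 1, Measurable (ε h))
    (hbdd : ∀ h ∈ Ioo (0 : ℝ) 1, ∀ ω, ε h ω ≤ α⁻¹)
    (hvalid : ∀ h ∈ Ioo (0 : ℝ) 1, ∀ P ∈ H, ∫⁻ ω, ε h ω ∂P ≤ 1)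
    (hopt : ∀ h ∈ Ioo (0 : ℝ) 1, ∀ ε' : Ω → ℝ≥0∞, Measurable ε' →
      (∀ ω, ε' ω ≤ α⁻¹) → (∀ P ∈ H, ∫⁻ ω, ε' ω ∂P ≤ 1) →
      ∫⁻ ω, ε' ω ^ h ∂Q ≤ ∫⁻ ω, ε h ω ^ h ∂Q)
    (L : Ω → ℝ≥0∞)
    (hL : ∀ ω, Filter.Tendsto (fun h => ε h ω)
      (nhdsWithin 1 (Ioo (0 : ℝ) 1)) (nhds (L ω))) :
    ∀ ε' : Ω → ℝ≥0∞, Measurable ε' → (∀ ω, ε' ω ≤ α⁻¹) →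
      (∀ P ∈ H, ∫⁻ ω, ε' ω ∂P ≤ 1) →
      ∫⁻ ω, ε' ω ∂Q ≤ ∫⁻ ω, L ω ∂Q :=
  limit_of_generalized_mean_optimal_is_NP_optimal_general H Q α hα0 hα1 ε hmeas hbdd hopt L hL
end

section
/- Let P, Q be probability measures on Ω with densities p, q with respect to H̄ = (P + Q)/2, let α > 0, let U be a utility function on [0, 1/α], and let Ω₊ = {ω : p(ω) > 0 and q(ω) > 0}. Define M(λ) = ∫_{Ω₊} p(ω)·min((U')⁻¹(λ·p(ω)/q(ω)), 1/α) dH̄(ω) for λ ≥ 0. If there exists some λ ≥ 0 with M(λ) ≤ 1, then there exists λ* ≥ 0 with M(λ*) ≤ 1 such that either λ* = 0 or M(λ*) = 1. Moreover, λ* = 0 suffices if and only if α ≥ P(Ω₊). -/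
/-!
The clipped inverse `y ↦ min ((U')⁻¹ y) (1/α)` is antitone and takes every value in `(0, 1/α)`
(namely `(U')⁻¹ (U' x) = x`), so it has no jumps and is continuous. Since the integrand of `M` is
dominated by `p / α`, whose integral over `Ω₊` is `P(Ω₊) / α < ∞`, dominated convergence makes
`M` continuous. As `(U')⁻¹ 0 = ∞`, `M(0) = P(Ω₊) / α`; if this exceeds `1`, the intermediate value
theorem on `[0, λ]` gives `λ*` with `M(λ*) = 1`.
-/

open MeasureTheory ENNReal NNReal Set

open Filter Topology

theorem Antitone.continuous_min_of_Ioo_subset_range {α β : Type*} [TopologicalSpace α]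
    [LinearOrder α] [OrderTopology α] [TopologicalSpace β] [LinearOrder β] [OrderTopology β]
    [DenselyOrdered β] [OrderBot β] {f : α → β} (hf : Antitone f) {c : β}
    (hrange : Ioo ⊥ c ⊆ range f) : Continuous fun y => min (f y) c := by
  refine continuous_iff_continuousAt.2 fun t => tendsto_order.2 ⟨fun a ha => ?_, fun b hb => ?_⟩
  · obtain ⟨x, hax, hxt⟩ := exists_between ha
    obtain ⟨z, rfl⟩ := hrange ⟨bot_le.trans_lt hax, hxt.trans_le (min_le_right _ _)⟩
    have htz : t < z := hf.reflect_lt (hxt.trans_le (min_le_left _ _))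
    filter_upwards [Iio_mem_nhds htz] with y hy
    exact hax.trans_le (le_min (hf hy.le) (hxt.le.trans (min_le_right _ _)))
  · rcases lt_or_ge c b with hcb | hbc
    · exact Eventually.of_forall fun y => (min_le_right _ _).trans_lt hcb
    obtain ⟨x, htx, hxb⟩ := exists_between hb
    obtain ⟨z, rfl⟩ := hrange ⟨bot_le.trans_lt htx, hxb.trans_le hbc⟩
    have hzt : z < t := hf.reflect_lt ((min_lt_iff.1 htx).resolve_right (hxb.trans_le hbc).not_gt)
    filter_upwards [Ioi_mem_nhds hzt] with y hy
    exact (min_le_left _ _).trans_lt ((hf hy.le).trans_lt hxb)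

theorem IsUtility.Ioo_subset_range {α : ℝ≥0∞} {U D Dinv : ℝ≥0∞ → ℝ≥0∞} (hU : IsUtility α U D)
    (hDinv_inv : ∀ x ∈ Icc (0 : ℝ≥0∞) α⁻¹, 0 < D x → D x ≠ ∞ → Dinv (D x) = x) :
    Ioo 0 α⁻¹ ⊆ range Dinv := by
  rintro x ⟨hx0, hxα⟩
  have hD_pos : 0 < D x :=
    (zero_le).trans_lt (hU.deriv_strictAntiOn ⟨zero_le, hxα.le⟩ ⟨zero_le, le_rfl⟩ hxα)
  exact ⟨D x, hDinv_inv x ⟨zero_le, hxα.le⟩ hD_pos (hU.deriv_finite x hx0 hxα)⟩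

theorem continuous_lintegral_mul_comp_mul {Ω : Type*} [MeasurableSpace Ω] {μ : Measure Ω}
    {p r : Ω → ℝ≥0∞} (hp : Measurable p) (hr : Measurable r) (hp_int : ∫⁻ ω, p ω ∂μ ≠ ∞)
    (hr_fin : ∀ᵐ ω ∂μ, r ω ≠ ∞) {g : ℝ≥0∞ → ℝ≥0∞} (hg : Continuous g) {C : ℝ≥0∞}
    (hgC : ∀ y, g y ≤ C) (hC : C ≠ ∞) :
    Continuous fun lam : ℝ≥0 => ∫⁻ ω, p ω * g (lam * r ω) ∂μ := by
  refine continuous_iff_continuousAt.2 fun c =>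
    tendsto_lintegral_filter_of_dominated_convergence (fun ω => p ω * C)
      (Eventually.of_forall fun lam => hp.mul (hg.measurable.comp (measurable_const.mul hr)))
      (Eventually.of_forall fun lam => Eventually.of_forall fun ω => mul_le_mul_right (hgC _) _)
      (by rw [lintegral_mul_const _ hp]; exact mul_ne_top hp_int hC) ?_
  filter_upwards [ae_lt_top hp hp_int, hr_fin] with ω hpω hrω
  have hlam : Tendsto (fun lam : ℝ≥0 => (lam : ℝ≥0∞) * r ω) (𝓝 c) (𝓝 (c * r ω)) :=
    ENNReal.Tendsto.mul_const (ENNReal.tendsto_coe.2 tendsto_id) (Or.inr hrω)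
  exact ENNReal.Tendsto.const_mul ((hg.tendsto _).comp hlam) (Or.inr hpω.ne)

theorem exists_le_and_eq_zero_or_eq_of_continuous {β : Type*} [LinearOrder β]
    [TopologicalSpace β] [OrderClosedTopology β] {f : ℝ≥0 → β} (hf : Continuous f) {b : β}
    (hex : ∃ lam, f lam ≤ b) : ∃ lam, f lam ≤ b ∧ (lam = 0 ∨ f lam = b) := by
  rcases le_or_gt (f 0) b with h0 | h0
  · exact ⟨0, h0, Or.inl rfl⟩
  obtain ⟨lam₀, hlam₀⟩ := hex
  obtain ⟨lam, -, hlam⟩ :=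
    intermediate_value_Icc' (zero_le) hf.continuousOn ⟨hlam₀, h0.le⟩
  exact ⟨lam, hlam.le, Or.inr hlam⟩

theorem exists_lambda_star_general
    {Ω : Type*} [MeasurableSpace Ω]
    (P Q : Measure Ω) [IsProbabilityMeasure P]
    (p q : Ω → ℝ≥0∞) (hp : Measurable p) (hq : Measurable q)
    (hPd : P = ((2 : ℝ≥0∞)⁻¹ • (P + Q)).withDensity p)
    (α : ℝ≥0∞) (hα : 0 < α)
    (U D Dinv : ℝ≥0∞ → ℝ≥0∞) (hU : IsUtility α U D)
    (hDinv_anti : Antitone Dinv) (hDinv_zero : Dinv 0 = ∞)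
    (hDinv_inv : ∀ x ∈ Icc (0 : ℝ≥0∞) α⁻¹, 0 < D x → D x ≠ ∞ → Dinv (D x) = x)
    (M : ℝ≥0 → ℝ≥0∞)
    (hM : ∀ lam : ℝ≥0, M lam =
      ∫⁻ ω in {ω | 0 < p ω ∧ 0 < q ω},
        p ω * min (Dinv ((lam : ℝ≥0∞) * (p ω / q ω))) α⁻¹
          ∂((2 : ℝ≥0∞)⁻¹ • (P + Q)))
    (hex : ∃ lam : ℝ≥0, M lam ≤ 1) :
    (∃ lam : ℝ≥0, M lam ≤ 1 ∧ (lam = 0 ∨ M lam = 1)) ∧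
      (M 0 ≤ 1 ↔ P {ω | 0 < p ω ∧ 0 < q ω} ≤ α) := by
  set H : Measure Ω := (2 : ℝ≥0∞)⁻¹ • (P + Q)
  set S : Set Ω := {ω | 0 < p ω ∧ 0 < q ω}
  have hS : MeasurableSet S := (hp measurableSet_Ioi).inter (hq measurableSet_Ioi)
  have hPS : P S = ∫⁻ ω in S, p ω ∂H := by
    conv_lhs => rw [hPd]
    exact withDensity_apply _ hS
  have hPS_fin : ∫⁻ ω in S, p ω ∂H ≠ ∞ := hPS ▸ measure_ne_top P S
  have hratio_fin : ∀ᵐ ω ∂H.restrict S, p ω / q ω ≠ ∞ := by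
    filter_upwards [ae_lt_top hp hPS_fin, ae_restrict_mem hS] with ω hpω hωS
    exact (ENNReal.div_lt_top hpω.ne hωS.2.ne').ne
  have hM_cont : Continuous M := by
    simp only [funext hM]
    exact continuous_lintegral_mul_comp_mul hp (hp.div hq) hPS_fin hratio_fin
      (hDinv_anti.continuous_min_of_Ioo_subset_range (hU.Ioo_subset_range hDinv_inv))
      (fun _ => min_le_right _ _) (inv_ne_top.2 hα.ne')
  have hM_zero : M 0 = P S / α := by
    simp only [hM, ENNReal.coe_zero, zero_mul, hDinv_zero, min_eq_right le_top, div_eq_mul_inv]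
    rw [lintegral_mul_const _ hp, hPS]
  refine ⟨exists_le_and_eq_zero_or_eq_of_continuous hM_cont hex, ?_⟩
  rw [hM_zero, ENNReal.div_le_iff_le_mul (Or.inl hα.ne') (Or.inr one_ne_zero), one_mul]

/-- Existence of the multiplier `λ*` (Lemma `lem:existence_lambda`): with
`M(λ) = ∫_{Ω₊} p·min((U')⁻¹(λ·p/q), 1/α) dH̄` over
`Ω₊ = {p > 0 and q > 0}`, if `M(λ) ≤ 1` for some `λ ≥ 0` then there is
`λ* ≥ 0` with `M(λ*) ≤ 1` and either `λ* = 0` or `M(λ*) = 1`; moreover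
`λ* = 0` suffices (i.e. `M(0) ≤ 1`) if and only if `α ≥ P(Ω₊)`. -/
theorem exists_lambda_star
    {Ω : Type*} [MeasurableSpace Ω]
    (P Q : Measure Ω) [IsProbabilityMeasure P] [IsProbabilityMeasure Q]
    (p q : Ω → ℝ≥0∞) (hp : Measurable p) (hq : Measurable q)
    (hPd : P = ((2 : ℝ≥0∞)⁻¹ • (P + Q)).withDensity p)
    (hQd : Q = ((2 : ℝ≥0∞)⁻¹ • (P + Q)).withDensity q)
    (α : ℝ≥0∞) (hα : 0 < α)
    (U D Dinv : ℝ≥0∞ → ℝ≥0∞) (hU : IsUtility α U D)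
    (hDinv_anti : Antitone Dinv) (hDinv_zero : Dinv 0 = ∞) (hDinv_top : Dinv ∞ = 0)
    (hDinv_inv : ∀ x ∈ Icc (0 : ℝ≥0∞) α⁻¹, 0 < D x → D x ≠ ∞ → Dinv (D x) = x)
    (M : ℝ≥0 → ℝ≥0∞)
    (hM : ∀ lam : ℝ≥0, M lam =
      ∫⁻ ω in {ω | 0 < p ω ∧ 0 < q ω},
        p ω * min (Dinv ((lam : ℝ≥0∞) * (p ω / q ω))) α⁻¹
          ∂((2 : ℝ≥0∞)⁻¹ • (P + Q)))
    (hex : ∃ lam : ℝ≥0, M lam ≤ 1) :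
    (∃ lam : ℝ≥0, M lam ≤ 1 ∧ (lam = 0 ∨ M lam = 1)) ∧
      (M 0 ≤ 1 ↔ P {ω | 0 < p ω ∧ 0 < q ω} ≤ α) :=
  exists_lambda_star_general P Q p q hp hq hPd α hα U D Dinv hU hDinv_anti hDinv_zero hDinv_inv M hM
    hex
end
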